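/- Let x₀,…,x_N satisfy the forward Markov model x_k = M_{k,k-1} x_{k-1} + e^M_k (k ∈ [1,N]), x₀ = e^M₀, and let backward parameters M^B_k, M^B_{k,k+1} be the probabilistically equivalent backward parameters. Define e^{BM}_0,…,e^{BM}_N by (M^B₀)⁻¹ e^{BM}₀ = M₀⁻¹ e^M₀ - M₁,₀' M₁⁻¹ e^M₁; (M^B_k)⁻¹ e^{BM}_k = (M^B_{k-1,k})'(M^B_{k-1})⁻¹ e^{BM}_{k-1} + M_k⁻¹ e^M_k - M_{k+1,k}' M_{k+1}⁻¹ e^M_{k+1} for k ∈ [1,N-1]; and (M^B_N)⁻¹ e^{BM}_N = (M^B_{N-1,N})'(M^B_{N-1})⁻¹ e^{BM}_{N-1} + M_N⁻¹ e^M_N. Then x_k = M^B_{k,k+1} x_{k+1} + e^{BM}_k for all k ∈ [0,N-1] and x_N = e^{BM}_N, i.e., the same sample path satisfies the backward model. -/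
import Mathlib


open Matrix MeasureTheory

/-- Square `d × d` real matrices (one block). -/
abbrev SqMat (d : ℕ) := Matrix (Fin d) (Fin d) ℝ

/-- Big `(N+1)d × (N+1)d` real matrices, viewed as `(N+1) × (N+1)` arrays of
`d × d` blocks. -/
abbrev BigMat (N d : ℕ) := Matrix (Fin (N+1) × Fin d) (Fin (N+1) × Fin d) ℝ

/-- The `(i,j)` block of a big matrix. -/
def blk {N d : ℕ} (A : BigMat N d) (i j : Fin (N+1)) : SqMat d :=
  fun a b => A (i, a) (j, b)

/-- Block diagonal big matrix with diagonal blocks `D 0, …, D N`. -/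
def bdiag (N d : ℕ) (D : ℕ → SqMat d) : BigMat N d :=
  fun p q => if (p.1 : ℕ) = (q.1 : ℕ) then D (p.1 : ℕ) p.2 q.2 else 0

/-- The block lower bidiagonal matrix `𝓜` of a forward Markov model: identity blocks
on the diagonal and block `-(T k) = -M_{k,k-1}` in position `(k, k-1)` for `k ∈ [1,N]`. -/
def lowerBidiag (N d : ℕ) (T : ℕ → SqMat d) : BigMat N d :=
  fun p q =>
    if (p.1 : ℕ) = (q.1 : ℕ) then (if p.2 = q.2 then 1 else 0)
    else if (q.1 : ℕ) + 1 = (p.1 : ℕ) then -(T (p.1 : ℕ) p.2 q.2) else 0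

/-- The block upper bidiagonal matrix `𝓜ᴮ` of a backward Markov model: identity blocks
on the diagonal and block `-(T k) = -Mᴮ_{k,k+1}` in position `(k, k+1)` for `k ∈ [0,N-1]`. -/
def upperBidiag (N d : ℕ) (T : ℕ → SqMat d) : BigMat N d :=
  fun p q =>
    if (p.1 : ℕ) = (q.1 : ℕ) then (if p.2 = q.2 then 1 else 0)
    else if (p.1 : ℕ) + 1 = (q.1 : ℕ) then -(T (p.1 : ℕ) p.2 q.2) else 0

section Aux
variable {N d : ℕ}

lemma sum_ite_val {n : ℕ} (m : Fin n) (f : Fin n → ℝ) :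
    ∑ j : Fin n, (if (m : ℕ) = (j : ℕ) then f j else 0) = f m := by
  rw [Finset.sum_eq_single m]
  · simp
  · intro j _ hj; rw [if_neg (fun h => hj (Fin.ext h.symm))]
  · simp

lemma sum_if_pull {α : Type*} [Fintype α] (c : Prop) [Decidable c] (f : α → ℝ) :
    ∑ b, (if c then f b else 0) = if c then ∑ b, f b else 0 := by
  split_ifs <;> simp

lemma lowerBidiag_mulVec_row (T : ℕ → SqMat d) (V : Fin (N+1) × Fin d → ℝ)
    (p : Fin (N+1)) (a : Fin d) :
    (lowerBidiag N d T).mulVec V (p, a) =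
      V (p, a) + ∑ j : Fin (N+1),
        (if (j : ℕ) + 1 = (p : ℕ) then -((T (p : ℕ)).mulVec (fun b => V (j, b)) a) else 0) := by
  rw [Matrix.mulVec, dotProduct, Fintype.sum_prod_type]
  trans ∑ j : Fin (N+1), ((if (p : ℕ) = (j : ℕ) then V (j, a) else 0) +
      (if (j : ℕ) + 1 = (p : ℕ) then -((T (p : ℕ)).mulVec (fun b => V (j, b)) a) else 0))
  · refine Finset.sum_congr rfl fun j _ => ?_
    by_cases h1 : (p : ℕ) = (j : ℕ)
    · have h2 : ¬((j : ℕ) + 1 = (p : ℕ)) := by omega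
      simp [lowerBidiag, h1, h2, ite_mul, Finset.sum_ite_eq]
    · simp only [lowerBidiag, if_neg h1, ite_mul, zero_mul, neg_mul, sum_if_pull,
        Matrix.mulVec, dotProduct]
      simp
  · rw [Finset.sum_add_distrib, sum_ite_val p (fun j => V (j, a))]

lemma upperBidiag_mulVec_row (T : ℕ → SqMat d) (V : Fin (N+1) × Fin d → ℝ)
    (p : Fin (N+1)) (a : Fin d) :
    (upperBidiag N d T).mulVec V (p, a) =
      V (p, a) + ∑ j : Fin (N+1),
        (if (p : ℕ) + 1 = (j : ℕ) then -((T (p : ℕ)).mulVec (fun b => V (j, b)) a) else 0) := by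
  rw [Matrix.mulVec, dotProduct, Fintype.sum_prod_type]
  trans ∑ j : Fin (N+1), ((if (p : ℕ) = (j : ℕ) then V (j, a) else 0) +
      (if (p : ℕ) + 1 = (j : ℕ) then -((T (p : ℕ)).mulVec (fun b => V (j, b)) a) else 0))
  · refine Finset.sum_congr rfl fun j _ => ?_
    by_cases h1 : (p : ℕ) = (j : ℕ)
    · have h2 : ¬((p : ℕ) + 1 = (j : ℕ)) := by omega
      simp [upperBidiag, h1, h2, ite_mul, Finset.sum_ite_eq]
    · simp only [upperBidiag, if_neg h1, ite_mul, zero_mul, neg_mul, sum_if_pull,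
        Matrix.mulVec, dotProduct]
      simp
  · rw [Finset.sum_add_distrib, sum_ite_val p (fun j => V (j, a))]

lemma bdiag_mulVec_row (D : ℕ → SqMat d) (V : Fin (N+1) × Fin d → ℝ)
    (j : Fin (N+1)) (a : Fin d) :
    (bdiag N d D).mulVec V (j, a) = (D (j : ℕ)).mulVec (fun b => V (j, b)) a := by
  rw [Matrix.mulVec, dotProduct, Fintype.sum_prod_type]
  trans ∑ k : Fin (N+1), (if (j : ℕ) = (k : ℕ) then (D (j : ℕ)).mulVec (fun b => V (k, b)) a else 0)
  · refine Finset.sum_congr rfl fun k _ => ?_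
    by_cases h1 : (j : ℕ) = (k : ℕ)
    · simp only [bdiag, if_pos h1, Matrix.mulVec, dotProduct]
    · simp only [bdiag, if_neg h1, zero_mul, Finset.sum_const_zero]
  · rw [sum_ite_val j]

lemma lowerBidiag_row_zero (T : ℕ → SqMat d) (V : Fin (N+1) × Fin d → ℝ)
    (h0 : 0 < N + 1) (a : Fin d) :
    (lowerBidiag N d T).mulVec V (⟨0, h0⟩, a) = V (⟨0, h0⟩, a) := by
  rw [lowerBidiag_mulVec_row]
  rw [Finset.sum_eq_zero (fun j _ => by rw [if_neg (by simp)]), add_zero]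

lemma lowerBidiag_row_succ (T : ℕ → SqMat d) (V : Fin (N+1) × Fin d → ℝ)
    (i : ℕ) (hi : i + 1 < N + 1) (a : Fin d) :
    (lowerBidiag N d T).mulVec V (⟨i + 1, hi⟩, a) =
      V (⟨i + 1, hi⟩, a) - (T (i + 1)).mulVec (fun b => V (⟨i, Nat.lt_of_succ_lt hi⟩, b)) a := by
  rw [lowerBidiag_mulVec_row]
  have : ∑ j : Fin (N+1), (if (j : ℕ) + 1 = ((⟨i+1, hi⟩ : Fin (N+1)) : ℕ) then
      -((T ((⟨i+1, hi⟩ : Fin (N+1)) : ℕ)).mulVec (fun b => V (j, b)) a) else 0)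
      = -((T (i+1)).mulVec (fun b => V (⟨i, Nat.lt_of_succ_lt hi⟩, b)) a) := by
    rw [Finset.sum_eq_single (⟨i, Nat.lt_of_succ_lt hi⟩ : Fin (N+1))]
    · simp
    · intro j _ hj
      rw [if_neg (fun h => hj (Fin.ext (by simpa using h)))]
    · simp
  rw [this]; ring

lemma upperBidiag_row_last (T : ℕ → SqMat d) (V : Fin (N+1) × Fin d → ℝ)
    (hn : N < N + 1) (a : Fin d) :
    (upperBidiag N d T).mulVec V (⟨N, hn⟩, a) = V (⟨N, hn⟩, a) := by
  rw [upperBidiag_mulVec_row]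
  refine Eq.trans ?_ (add_zero _)
  congr 1
  refine Finset.sum_eq_zero fun j _ => ?_
  have hj := j.isLt
  have hv : ((⟨N, hn⟩ : Fin (N+1)) : ℕ) = N := rfl
  rw [if_neg (by omega)]

lemma upperBidiag_row_lt (T : ℕ → SqMat d) (V : Fin (N+1) × Fin d → ℝ)
    (i : ℕ) (hi : i < N) (a : Fin d) :
    (upperBidiag N d T).mulVec V (⟨i, Nat.lt_succ_of_lt hi⟩, a) =
      V (⟨i, Nat.lt_succ_of_lt hi⟩, a)
        - (T i).mulVec (fun b => V (⟨i + 1, by omega⟩, b)) a := by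
  rw [upperBidiag_mulVec_row]
  have : ∑ j : Fin (N+1), (if i + 1 = (j : ℕ) then
      -((T i).mulVec (fun b => V (j, b)) a) else 0)
      = -((T i).mulVec (fun b => V (⟨i + 1, by omega⟩, b)) a) := by
    rw [Finset.sum_eq_single (⟨i + 1, by omega⟩ : Fin (N+1))]
    · simp
    · intro j _ hj
      rw [if_neg (fun h => hj (Fin.ext (by simpa using h.symm)))]
    · simp
  rw [this]; ring

lemma lowerBidiag_transpose (T : ℕ → SqMat d) :
    (lowerBidiag N d T)ᵀ = upperBidiag N d (fun i => (T (i + 1))ᵀ) := by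
  ext p q
  simp only [Matrix.transpose_apply, lowerBidiag, upperBidiag]
  by_cases h1 : (p.1 : ℕ) = (q.1 : ℕ)
  · rw [if_pos h1.symm, if_pos h1]
    by_cases h2 : p.2 = q.2 <;> simp [h2, eq_comm]
  · rw [if_neg (fun h => h1 h.symm), if_neg h1]
    by_cases h2 : (p.1 : ℕ) + 1 = (q.1 : ℕ)
    · rw [if_pos h2, if_pos h2, h2]
    · rw [if_neg h2, if_neg h2]

lemma upperBidiag_transpose (T : ℕ → SqMat d) :
    (upperBidiag N d T)ᵀ = lowerBidiag N d (fun i => (T (i - 1))ᵀ) := by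
  ext p q
  simp only [Matrix.transpose_apply, lowerBidiag, upperBidiag]
  by_cases h1 : (p.1 : ℕ) = (q.1 : ℕ)
  · rw [if_pos h1.symm, if_pos h1]
    by_cases h2 : p.2 = q.2 <;> simp [h2, eq_comm]
  · rw [if_neg (fun h => h1 h.symm), if_neg h1]
    by_cases h2 : (q.1 : ℕ) + 1 = (p.1 : ℕ)
    · rw [if_pos h2, if_pos h2]
      have h3 : (p.1 : ℕ) - 1 = (q.1 : ℕ) := by omega
      rw [h3]
    · rw [if_neg h2, if_neg h2]


/-- if `x₀,…,x_N` satisfy the forward Markov model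
`x_k = M_{k,k-1} x_{k-1} + eᴹ_k`, `x₀ = eᴹ₀`, and the backward parameters
`Mᴮ_k, Mᴮ_{k,k+1}` are the probabilistically equivalent backward parameters, then the
noises `eᴮᴹ_k` defined by the stated relations make the same sample path satisfy the
backward model `x_k = Mᴮ_{k,k+1} x_{k+1} + eᴮᴹ_k` (`k ∈ [0,N-1]`), `x_N = eᴮᴹ_N`. -/
theorem same_path_satisfies_backward_model {N d : ℕ} (hN : 0 < N)
    (Tr M TB MB : ℕ → SqMat d)
    (hM : ∀ k ≤ N, (M k).PosDef) (hMB : ∀ k ≤ N, (MB k).PosDef)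
    (hPE : (upperBidiag N d TB)ᵀ * bdiag N d (fun k => (MB k)⁻¹) * upperBidiag N d TB =
      (lowerBidiag N d Tr)ᵀ * bdiag N d (fun k => (M k)⁻¹) * lowerBidiag N d Tr)
    (x eM eBM : ℕ → Fin d → ℝ)
    (hx0 : x 0 = eM 0)
    (hmodel : ∀ k, 1 ≤ k → k ≤ N → x k = (Tr k).mulVec (x (k-1)) + eM k)
    (he0 : ((MB 0)⁻¹).mulVec (eBM 0) =
      ((M 0)⁻¹).mulVec (eM 0) - ((Tr 1)ᵀ * (M 1)⁻¹).mulVec (eM 1))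
    (hemid : ∀ k, 1 ≤ k → k ≤ N - 1 →
      ((MB k)⁻¹).mulVec (eBM k) =
        ((TB (k-1))ᵀ * (MB (k-1))⁻¹).mulVec (eBM (k-1))
          + ((M k)⁻¹).mulVec (eM k)
          - ((Tr (k+1))ᵀ * (M (k+1))⁻¹).mulVec (eM (k+1)))
    (heN : ((MB N)⁻¹).mulVec (eBM N) =
      ((TB (N-1))ᵀ * (MB (N-1))⁻¹).mulVec (eBM (N-1)) + ((M N)⁻¹).mulVec (eM N)) :
    (∀ k < N, x k = (TB k).mulVec (x (k+1)) + eBM k) ∧ x N = eBM N := by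
  classical
  set Vx : Fin (N+1) × Fin d → ℝ := fun p => x (p.1 : ℕ) p.2 with hVx
  set Ve : Fin (N+1) × Fin d → ℝ := fun p => eM (p.1 : ℕ) p.2 with hVe
  set Vb : Fin (N+1) × Fin d → ℝ := fun p => eBM (p.1 : ℕ) p.2 with hVb
  -- big vectors
  have h1 : (lowerBidiag N d Tr).mulVec Vx =
      Ve := by
    funext p
    obtain ⟨⟨i, hi⟩, a⟩ := p
    match i, hi with
    | 0, hi =>
      rw [lowerBidiag_row_zero]
      show x 0 a = eM 0 a
      rw [hx0]
    | (m+1), hi =>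
      rw [lowerBidiag_row_succ]
      show x (m+1) a - (Tr (m+1)).mulVec (x m) a = eM (m+1) a
      have hm := hmodel (m+1) (by omega) (by omega)
      simp only [Nat.add_sub_cancel] at hm
      rw [hm, Pi.add_apply]
      ring
  have h2 : ((upperBidiag N d TB)ᵀ).mulVec
        ((bdiag N d (fun k => (MB k)⁻¹)).mulVec Vb) =
      ((lowerBidiag N d Tr)ᵀ).mulVec
        ((bdiag N d (fun k => (M k)⁻¹)).mulVec Ve) := by
    rw [upperBidiag_transpose, lowerBidiag_transpose]
    funext p
    obtain ⟨⟨i, hi⟩, a⟩ := p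
    match i, hi with
    | 0, hi =>
      rw [lowerBidiag_row_zero]
      rw [show (⟨0, hi⟩ : Fin (N+1)) = ⟨0, Nat.lt_succ_of_lt hN⟩ from rfl,
        upperBidiag_row_lt _ _ 0 hN]
      simp only [bdiag_mulVec_row]
      have h0 := congrFun he0 a
      simp only [Pi.sub_apply, ← Matrix.mulVec_mulVec] at h0
      exact h0
    | (m+1), hi =>
      rw [lowerBidiag_row_succ]
      by_cases hc : m + 1 = N
      · subst hc
        rw [show (⟨m+1, hi⟩ : Fin (m+1+1)) = ⟨m+1, Nat.lt_succ_self _⟩ from rfl,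
          upperBidiag_row_last]
        simp only [bdiag_mulVec_row]
        have h0 := congrFun heN a
        simp only [Pi.add_apply, Nat.add_sub_cancel, ← Matrix.mulVec_mulVec] at h0
        simp only [Nat.add_sub_cancel]
        linarith [h0]
      · have hlt : m + 1 < N := by omega
        rw [show (⟨m+1, hi⟩ : Fin (N+1)) = ⟨m+1, Nat.lt_succ_of_lt hlt⟩ from rfl,
          upperBidiag_row_lt _ _ (m+1) hlt]
        simp only [bdiag_mulVec_row]
        have h0 := congrFun (hemid (m+1) (by omega) (by omega)) a
        simp only [Pi.add_apply, Pi.sub_apply, Nat.add_sub_cancel,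
          ← Matrix.mulVec_mulVec] at h0
        simp only [Nat.add_sub_cancel]
        linarith [h0]
  have h3 : ((upperBidiag N d TB)ᵀ).mulVec
        ((bdiag N d (fun k => (MB k)⁻¹)).mulVec
          ((upperBidiag N d TB).mulVec Vx)) =
      ((upperBidiag N d TB)ᵀ).mulVec
        ((bdiag N d (fun k => (MB k)⁻¹)).mulVec Vb) := by
    rw [Matrix.mulVec_mulVec, Matrix.mulVec_mulVec, hPE, ← Matrix.mulVec_mulVec,
      ← Matrix.mulVec_mulVec, h1]
    exact h2.symm
  have h4 : ((upperBidiag N d TB)ᵀ).mulVec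
        ((bdiag N d (fun k => (MB k)⁻¹)).mulVec
          ((upperBidiag N d TB).mulVec Vx
            - Vb)) = 0 := by
    rw [Matrix.mulVec_sub, Matrix.mulVec_sub, h3, sub_self]
  rw [upperBidiag_transpose] at h4
  set Z : Fin (N+1) × Fin d → ℝ :=
    (bdiag N d (fun k => (MB k)⁻¹)).mulVec
      ((upperBidiag N d TB).mulVec Vx
        - Vb) with hZ
  have h5 : ∀ i : ℕ, ∀ hi : i < N + 1, ∀ a : Fin d, Z (⟨i, hi⟩, a) = 0 := by
    intro i
    induction i with
    | zero =>
      intro hi a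
      have := congrFun h4 (⟨0, hi⟩, a)
      rw [lowerBidiag_row_zero] at this
      exact this
    | succ m ih =>
      intro hi a
      have h := congrFun h4 (⟨m+1, hi⟩, a)
      rw [lowerBidiag_row_succ] at h
      have hz : (fun b => Z (⟨m, Nat.lt_of_succ_lt hi⟩, b)) = 0 :=
        funext fun b => ih (Nat.lt_of_succ_lt hi) b
      rw [hz, Matrix.mulVec_zero] at h
      simpa using h
  have key : ∀ i : ℕ, ∀ hi : i < N + 1, ∀ a : Fin d,
      (upperBidiag N d TB).mulVec Vx (⟨i, hi⟩, a) = eBM i a := by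
    intro i hi a
    have hdet : IsUnit (MB i).det :=
      isUnit_iff_ne_zero.mpr (ne_of_gt (hMB i (by omega)).det_pos)
    have hz : ((MB i)⁻¹).mulVec
        (fun b => ((upperBidiag N d TB).mulVec Vx
          - Vb) (⟨i, hi⟩, b)) = 0 := by
      funext b
      exact (bdiag_mulVec_row (fun k => (MB k)⁻¹) _ ⟨i, hi⟩ b).symm.trans (h5 i hi b)
    have hu : (fun b => ((upperBidiag N d TB).mulVec Vx
          - Vb) (⟨i, hi⟩, b)) = 0 := by
      have h := congrArg (fun v => (MB i).mulVec v) hz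
      simpa [Matrix.mulVec_mulVec, Matrix.mul_nonsing_inv _ hdet,
        Matrix.one_mulVec, Matrix.mulVec_zero] using h
    have := congrFun hu a
    simp only [Pi.sub_apply, Pi.zero_apply] at this
    linarith [this]
  constructor
  · intro k hk
    funext a
    have h := key k (Nat.lt_succ_of_lt hk) a
    rw [upperBidiag_row_lt _ _ k hk a] at h
    show x k a = ((TB k).mulVec (x (k+1)) + eBM k) a
    rw [Pi.add_apply]
    have : (Matrix.mulVec (TB k) (fun b => x (k+1) b) a) =
        (TB k).mulVec (x (k+1)) a := rfl
    linarith [h]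
  · funext a
    have h := key N (Nat.lt_succ_self N) a
    rw [upperBidiag_row_last] at h
    exact h
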